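/- arXiv:1312.5189 — 2 statements merged into one kernel-verified Lean document; each statement's English description precedes it below -/
import Mathlib

section
/- Let 1 < δ < 2. Let g : [0,1] → ℝ be continuously differentiable on [0,1], twice continuously differentiable on (0,1], and suppose there exist constants C > 0 and θ ∈ (0,1) such that |g''(x)| ≤ C x^{-θ} for all 0 < x ≤ 1. Suppose g attains its global minimum over [0,1] at a point x₀ ∈ (0,1) and that g'(0) < 0. Then D*^δ g(x₀) > 0. -/
/-!
With `Φ t = (x₀ - t)^(1-δ) g'(t) - (δ-1) (x₀ - t)^(-δ) (g t - g x₀)` (two integrations by parts)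
one has `Φ' = (x₀ - t)^(1-δ) g'' - δ(δ-1) (x₀ - t)^(-δ-1) (g t - g x₀)`, and the subtracted term
is nonnegative because `x₀` is a minimum. As `g'(x₀) = 0`, the mean value theorem gives
`|g' t| ≤ M (x₀ - t)` and `|g t - g x₀| ≤ M (x₀ - t)²` near `x₀`, so `Φ t → 0` as `t → x₀⁻` and the
subtracted term is integrable. Hence the Caputo integral is at least
`-Φ 0 = -x₀^(1-δ) g'(0) + (δ-1) x₀^(-δ) (g 0 - g x₀) > 0`.
-/

open Set Filter Topology MeasureTheory intervalIntegral

/-- The Caputo fractional derivative of order `δ ∈ (1,2)` of `g`, using derivatives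
within `[0,1]`:  `D*^δ g (x) = (1/Γ(2-δ)) ∫₀ˣ (x-t)^(1-δ) g''(t) dt`. -/
noncomputable def caputoW (δ : ℝ) (g : ℝ → ℝ) (x : ℝ) : ℝ :=
  (1 / Real.Gamma (2 - δ)) *
    ∫ t in (0:ℝ)..x, (x - t) ^ (1 - δ) *
      derivWithin (derivWithin g (Set.Icc 0 1)) (Set.Icc 0 1) t

section Integrability

theorem intervalIntegrable_rpow_sub_left {p : ℝ} (hp : -1 < p) (a b : ℝ) :
    IntervalIntegrable (fun t => (t - a) ^ p) volume a b := by
  simpa using (intervalIntegrable_rpow' (a := 0) (b := b - a) hp).comp_sub_right a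

theorem intervalIntegrable_sub_rpow {p : ℝ} (hp : -1 < p) (a b : ℝ) :
    IntervalIntegrable (fun t => (b - t) ^ p) volume a b := by
  simpa using (intervalIntegrable_rpow' (a := b - a) (b := 0) hp).comp_sub_left b

variable {a b p : ℝ}

theorem IntervalIntegrable.of_abs_le {f φ : ℝ → ℝ} (hab : a ≤ b)
    (hφ : IntervalIntegrable φ volume a b) (hf : ContinuousOn f (Ioo a b))
    (hle : ∀ t ∈ Ioo a b, |f t| ≤ φ t) : IntervalIntegrable f volume a b := by
  rw [intervalIntegrable_iff_integrableOn_Ioo_of_le hab] at hφ ⊢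
  exact hφ.mono' (hf.aestronglyMeasurable measurableSet_Ioo)
    ((ae_restrict_iff' measurableSet_Ioo).2 (.of_forall hle))

theorem intervalIntegrable_sub_rpow_mul {f : ℝ → ℝ} {q C : ℝ} (hp : -1 < p) (hq : -1 < q)
    (hab : a < b) (hf : ContinuousOn f (Ioc a b))
    (hbound : ∀ t ∈ Ioc a b, |f t| ≤ C * (t - a) ^ q) :
    IntervalIntegrable (fun t => (b - t) ^ p * f t) volume a b := by
  set m := (a + b) / 2
  have ham : a < m := by simp only [m]; linarith
  have hmb : m < b := by simp only [m]; linarith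
  have hf_left : IntervalIntegrable f volume a m :=
    ((intervalIntegrable_rpow_sub_left hq a m).const_mul C).of_abs_le ham.le
      (hf.mono (Ioo_subset_Ioc_self.trans (Ioc_subset_Ioc_right hmb.le)))
      fun t ht => hbound t ⟨ht.1, ht.2.le.trans hmb.le⟩
  refine IntervalIntegrable.trans (b := m) (hf_left.continuousOn_mul ?_) ?_
  · rw [uIcc_of_le ham.le]
    exact (continuousOn_const.sub continuousOn_id).rpow_const
      fun t ht => Or.inl (sub_ne_zero.2 (ht.2.trans_lt hmb).ne')
  · refine (intervalIntegrable_sub_rpow hp m b).mul_continuousOn ?_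
    rw [uIcc_of_le hmb.le]
    exact hf.mono (Icc_subset_Ioc_iff hmb.le |>.2 ⟨ham, le_rfl⟩)

theorem intervalIntegrable_sub_rpow_mul_sub {g : ℝ → ℝ} {m M : ℝ} (hp : -3 < p) (ham : a ≤ m)
    (hmb : m < b) (hg : ContinuousOn g (Icc a b))
    (hbound : ∀ t ∈ Icc m b, |g t - g b| ≤ M * (b - t) ^ 2) :
    IntervalIntegrable (fun t => (b - t) ^ p * (g t - g b)) volume a b := by
  have hpow : ∀ s ⊆ Iio b, ContinuousOn (fun t => (b - t) ^ p) s := fun s hs =>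
    (continuousOn_const.sub continuousOn_id).rpow_const
      fun t ht => Or.inl (sub_ne_zero.2 (hs ht).ne')
  have hcont : ∀ s ⊆ Ico a b, ContinuousOn (fun t => (b - t) ^ p * (g t - g b)) s :=
    fun s hs => (hpow s fun t ht => (hs ht).2).mul
      ((hg.mono (hs.trans Ico_subset_Icc_self)).sub continuousOn_const)
  refine IntervalIntegrable.trans (b := m) ?_ ?_
  · refine ContinuousOn.intervalIntegrable (hcont _ ?_)
    rw [uIcc_of_le ham]
    exact Icc_subset_Ico_right hmb
  · refine ((intervalIntegrable_sub_rpow (by linarith : -1 < p + 2) m b).const_mul M).of_abs_le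
      hmb.le (hcont _ (Ioo_subset_Ico_self.trans (Ico_subset_Ico_left ham))) fun t ht => ?_
    have hbt : 0 < b - t := sub_pos.2 ht.2
    calc |(b - t) ^ p * (g t - g b)| = (b - t) ^ p * |g t - g b| := by
          rw [abs_mul, abs_of_nonneg (Real.rpow_nonneg hbt.le p)]
      _ ≤ (b - t) ^ p * (M * (b - t) ^ 2) :=
          mul_le_mul_of_nonneg_left (hbound t (Ioo_subset_Icc_self ht)) (Real.rpow_nonneg hbt.le p)
      _ = M * (b - t) ^ (p + 2) := by
          rw [show p + 2 = p + (2 : ℕ) by norm_num, Real.rpow_add_natCast hbt.ne']; ring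

end Integrability

section MeanValue

variable {f f' f'' : ℝ → ℝ} {a b M : ℝ}

theorem abs_sub_le_mul_of_abs_deriv_le (hf : ∀ t ∈ Icc a b, HasDerivAt f (f' t) t)
    (hM : ∀ t ∈ Icc a b, |f' t| ≤ M) {t : ℝ} (ht : t ∈ Icc a b) :
    |f t - f b| ≤ M * (b - t) := by
  have := Convex.norm_image_sub_le_of_norm_hasDerivWithin_le
    (fun s hs => (hf s hs).hasDerivWithinAt) hM (convex_Icc a b)
    (right_mem_Icc.2 (ht.1.trans ht.2)) ht
  rwa [Real.norm_eq_abs, Real.norm_eq_abs, abs_of_nonpos (sub_nonpos.2 ht.2), neg_sub] at this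

theorem abs_sub_le_mul_sq_of_deriv_eq_zero (hf : ∀ t ∈ Icc a b, HasDerivAt f (f' t) t)
    (hf' : ∀ t ∈ Icc a b, HasDerivAt f' (f'' t) t) (hb : f' b = 0)
    (hM : ∀ t ∈ Icc a b, |f'' t| ≤ M) {t : ℝ} (ht : t ∈ Icc a b) :
    |f t - f b| ≤ M * (b - t) ^ 2 := by
  have hsub : Icc t b ⊆ Icc a b := Icc_subset_Icc_left ht.1
  have hf'_le : ∀ s ∈ Icc t b, |f' s| ≤ M * (b - t) := fun s hs => by
    have := abs_sub_le_mul_of_abs_deriv_le hf' hM (hsub hs)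
    rw [hb, sub_zero] at this
    exact this.trans (mul_le_mul_of_nonneg_left (by linarith [hs.1])
      ((abs_nonneg _).trans (hM b (right_mem_Icc.2 (ht.1.trans ht.2)))))
  calc |f t - f b| ≤ M * (b - t) * (b - t) :=
        abs_sub_le_mul_of_abs_deriv_le (fun s hs => hf s (hsub hs)) hf'_le (left_mem_Icc.2 ht.2)
    _ = M * (b - t) ^ 2 := by ring

end MeanValue

noncomputable def caputoBoundaryTerm (δ b : ℝ) (g g' : ℝ → ℝ) (t : ℝ) : ℝ :=
  (b - t) ^ (1 - δ) * g' t - (δ - 1) * ((b - t) ^ (-δ) * (g t - g b))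

section BoundaryTerm

variable {δ a b t : ℝ} {g g' g'' : ℝ → ℝ}

theorem hasDerivAt_caputoBoundaryTerm (ht : t < b) (hg : HasDerivAt g (g' t) t)
    (hg' : HasDerivAt g' (g'' t) t) :
    HasDerivAt (caputoBoundaryTerm δ b g g')
      ((b - t) ^ (1 - δ) * g'' t - δ * (δ - 1) * ((b - t) ^ (-δ - 1) * (g t - g b))) t := by
  have hbt : b - t ≠ 0 := (sub_pos.2 ht).ne'
  have hsub : HasDerivAt (fun s => b - s) (-1) t := (hasDerivAt_id t).const_sub b
  have hpow : ∀ p : ℝ, HasDerivAt (fun s => (b - s) ^ p) (-(p * (b - t) ^ (p - 1))) t := fun p =>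
    ((Real.hasDerivAt_rpow_const (Or.inl hbt)).comp t hsub).congr_deriv (by ring)
  refine (((hpow (1 - δ)).mul hg').sub
    (((hpow (-δ)).mul (hg.sub_const (g b))).const_mul (δ - 1))).congr_deriv ?_
  rw [show 1 - δ - 1 = -δ by ring]
  ring

theorem continuousWithinAt_caputoBoundaryTerm {s : Set ℝ} (ht : t ≠ b)
    (hg : ContinuousWithinAt g s t) (hg' : ContinuousWithinAt g' s t) :
    ContinuousWithinAt (caputoBoundaryTerm δ b g g') s t := by
  have hbt : b - t ≠ 0 := sub_ne_zero.2 ht.symm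
  unfold caputoBoundaryTerm
  have hpow : ∀ p : ℝ, ContinuousWithinAt (fun s => (b - s) ^ p) s t := fun p =>
    (continuousWithinAt_const.sub continuousWithinAt_id).rpow_const (Or.inl hbt)
  exact ((hpow _).mul hg').sub
    (continuousWithinAt_const.mul ((hpow _).mul (hg.sub continuousWithinAt_const)))

theorem abs_caputoBoundaryTerm_le {M : ℝ} (ht : t < b) (hg' : |g' t| ≤ M * (b - t))
    (hg : |g t - g b| ≤ M * (b - t) ^ 2) :
    |caputoBoundaryTerm δ b g g' t| ≤ (1 + |δ - 1|) * M * (b - t) ^ (2 - δ) := by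
  have hbt : 0 < b - t := sub_pos.2 ht
  have e1 : (b - t) ^ (1 - δ) * (b - t) = (b - t) ^ (2 - δ) := by
    rw [show 2 - δ = 1 - δ + 1 by ring, Real.rpow_add_one hbt.ne']
  have e2 : (b - t) ^ (-δ) * (b - t) ^ 2 = (b - t) ^ (2 - δ) := by
    rw [show 2 - δ = -δ + (2 : ℕ) by push_cast; ring, Real.rpow_add_natCast hbt.ne']
  have hp : ∀ p : ℝ, 0 ≤ (b - t) ^ p := fun p => Real.rpow_nonneg hbt.le p
  calc |caputoBoundaryTerm δ b g g' t|
      ≤ (b - t) ^ (1 - δ) * |g' t| + |δ - 1| * ((b - t) ^ (-δ) * |g t - g b|) := by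
        unfold caputoBoundaryTerm
        refine (abs_sub _ _).trans_eq ?_
        rw [abs_mul, abs_mul, abs_mul, abs_of_nonneg (hp _), abs_of_nonneg (hp _)]
    _ ≤ (b - t) ^ (1 - δ) * (M * (b - t)) + |δ - 1| * ((b - t) ^ (-δ) * (M * (b - t) ^ 2)) := by
        gcongr
    _ = M * ((b - t) ^ (1 - δ) * (b - t)) + |δ - 1| * M * ((b - t) ^ (-δ) * (b - t) ^ 2) := by
        ring
    _ = (1 + |δ - 1|) * M * (b - t) ^ (2 - δ) := by
        rw [e1, e2]; ring

theorem tendsto_caputoBoundaryTerm_nhdsLT {M : ℝ} (hδ : δ < 2) (hab : a < b)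
    (hg' : ∀ t ∈ Icc a b, |g' t| ≤ M * (b - t))
    (hg : ∀ t ∈ Icc a b, |g t - g b| ≤ M * (b - t) ^ 2) :
    Tendsto (caputoBoundaryTerm δ b g g') (𝓝[<] b) (𝓝 0) := by
  have hlim : Tendsto (fun t => (1 + |δ - 1|) * M * (b - t) ^ (2 - δ)) (𝓝[<] b) (𝓝 0) := by
    have : ContinuousAt (fun t => (1 + |δ - 1|) * M * (b - t) ^ (2 - δ)) b :=
      continuousAt_const.mul ((continuousAt_const.sub continuousAt_id).rpow_const
        (Or.inr (by linarith)))
    simpa [Real.zero_rpow (by linarith : (2 : ℝ) - δ ≠ 0)] using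
      this.tendsto.mono_left nhdsWithin_le_nhds
  refine squeeze_zero_norm' ?_ hlim
  filter_upwards [Ioo_mem_nhdsLT hab] with t ht
  exact abs_caputoBoundaryTerm_le ht.2 (hg' t (Ioo_subset_Icc_self ht))
    (hg t (Ioo_subset_Icc_self ht))

end BoundaryTerm

theorem integral_sub_rpow_mul_pos_of_isMinOn {δ a b : ℝ} {g g' g'' : ℝ → ℝ} (hδ1 : 1 < δ)
    (hδ2 : δ < 2) (hab : a < b) (hg : ContinuousOn g (Icc a b))
    (hg'_cont : ContinuousWithinAt g' (Icc a b) a) (hg_deriv : ∀ t ∈ Ioc a b, HasDerivAt g (g' t) t)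
    (hg'_deriv : ∀ t ∈ Ioc a b, HasDerivAt g' (g'' t) t) (hg'' : ContinuousOn g'' (Ioc a b))
    (hint : IntervalIntegrable (fun t => (b - t) ^ (1 - δ) * g'' t) volume a b)
    (hmin : IsMinOn g (Icc a b) b) (hg'b : g' b = 0) (hg'a : g' a < 0) :
    0 < ∫ t in a..b, (b - t) ^ (1 - δ) * g'' t := by
  set m := (a + b) / 2
  have ham : a < m := by simp only [m]; linarith
  have hmb : m < b := by simp only [m]; linarith
  have hsub : Icc m b ⊆ Ioc a b := Icc_subset_Ioc_iff hmb.le |>.2 ⟨ham, le_rfl⟩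
  obtain ⟨M, hM⟩ := isCompact_Icc.exists_bound_of_continuousOn (hg''.mono hsub)
  have hg'_le : ∀ t ∈ Icc m b, |g' t| ≤ M * (b - t) := fun t ht => by
    simpa [hg'b] using abs_sub_le_mul_of_abs_deriv_le (fun s hs => hg'_deriv s (hsub hs)) hM ht
  have hg_le : ∀ t ∈ Icc m b, |g t - g b| ≤ M * (b - t) ^ 2 := fun t ht =>
    abs_sub_le_mul_sq_of_deriv_eq_zero (fun s hs => hg_deriv s (hsub hs))
      (fun s hs => hg'_deriv s (hsub hs)) hg'b hM ht
  set Ψ := fun t => δ * (δ - 1) * ((b - t) ^ (-δ - 1) * (g t - g b))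
  have hΨ_int : IntervalIntegrable Ψ volume a b :=
    (intervalIntegrable_sub_rpow_mul_sub (by linarith) ham.le hmb hg hg_le).const_mul _
  have hΨ_nonneg : 0 ≤ ∫ t in a..b, Ψ t := integral_nonneg hab.le fun t ht =>
    mul_nonneg (by nlinarith) (mul_nonneg (Real.rpow_nonneg (by linarith [ht.2]) _)
      (sub_nonneg.2 (hmin ht)))
  have hlim_a : Tendsto (caputoBoundaryTerm δ b g g') (𝓝[>] a)
      (𝓝 (caputoBoundaryTerm δ b g g' a)) :=
    (continuousWithinAt_caputoBoundaryTerm hab.ne (hg a (left_mem_Icc.2 hab.le)) hg'_cont).tendsto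
      |>.mono_left ((nhdsWithin_mono _ Ioi_subset_Ici_self).trans
        (nhdsWithin_le_of_mem (Icc_mem_nhdsGE hab)))
  have hFTC := integral_eq_sub_of_hasDerivAt_of_tendsto hab
    (fun t ht => hasDerivAt_caputoBoundaryTerm ht.2 (hg_deriv t (Ioo_subset_Ioc_self ht))
      (hg'_deriv t (Ioo_subset_Ioc_self ht)))
    (hint.sub hΨ_int) hlim_a (tendsto_caputoBoundaryTerm_nhdsLT hδ2 hmb hg'_le hg_le)
  have hboundary_neg : caputoBoundaryTerm δ b g g' a < 0 := by
    have hba : 0 < b - a := sub_pos.2 hab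
    have := mul_neg_of_pos_of_neg (Real.rpow_pos_of_pos hba (1 - δ)) hg'a
    have := mul_nonneg (sub_nonneg.2 hδ1.le) (mul_nonneg (Real.rpow_nonneg hba.le (-δ))
      (sub_nonneg.2 (hmin (left_mem_Icc.2 hab.le))))
    unfold caputoBoundaryTerm
    linarith
  rw [integral_sub hint hΨ_int] at hFTC
  linarith

theorem contDiffOn_derivWithin_Icc {f : ℝ → ℝ} {a b : ℝ} {n : WithTop ℕ∞}
    (hf : ContDiffOn ℝ (n + 1) f (Ioo a b)) :
    ContDiffOn ℝ n (derivWithin f (Icc a b)) (Ioo a b) :=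
  (hf.deriv_of_isOpen isOpen_Ioo le_rfl).congr fun _ ht =>
    derivWithin_of_mem_nhds (Icc_mem_nhds ht.1 ht.2)

theorem hasDerivAt_derivWithin_Icc {f : ℝ → ℝ} {a b t : ℝ} {n : WithTop ℕ∞}
    (hf : ContDiffOn ℝ n f (Ioo a b)) (hn : n ≠ 0) (ht : t ∈ Ioo a b) :
    HasDerivAt f (derivWithin f (Icc a b) t) t := by
  rw [derivWithin_of_mem_nhds (Icc_mem_nhds ht.1 ht.2)]
  exact ((hf.differentiableOn hn).differentiableAt
    (Ioo_mem_nhds ht.1 ht.2)).hasDerivAt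

theorem stmt1_general (δ : ℝ) (hδ1 : 1 < δ) (hδ2 : δ < 2) (g : ℝ → ℝ)
    (hg1 : ContDiffOn ℝ 1 g (Set.Icc 0 1)) (hg2 : ContDiffOn ℝ 2 g (Set.Ioc 0 1))
    (C θ : ℝ) (hθ2 : θ < 1)
    (hbound : ∀ x ∈ Set.Ioc (0:ℝ) 1,
      |derivWithin (derivWithin g (Set.Icc 0 1)) (Set.Icc 0 1) x| ≤ C * x ^ (-θ))
    (x₀ : ℝ) (hx₀ : x₀ ∈ Set.Ioo (0:ℝ) 1)
    (hmin : ∀ x ∈ Set.Icc (0:ℝ) 1, g x₀ ≤ g x)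
    (hg'0 : derivWithin g (Set.Icc 0 1) 0 < 0) :
    0 < caputoW δ g x₀ := by
  obtain ⟨hx0, hx1⟩ := hx₀
  have hIcc : Icc 0 x₀ ⊆ Icc (0:ℝ) 1 := Icc_subset_Icc_right hx1.le
  have hIoc : Ioc 0 x₀ ⊆ Ioo (0:ℝ) 1 := Ioc_subset_Ioo_right hx1
  have hg2' : ContDiffOn ℝ 2 g (Ioo 0 1) := hg2.mono Ioo_subset_Ioc_self
  have hg'C1 : ContDiffOn ℝ 1 (derivWithin g (Icc 0 1)) (Ioo 0 1) :=
    contDiffOn_derivWithin_Icc hg2'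
  have hg_deriv : ∀ t ∈ Ioo (0:ℝ) 1, HasDerivAt g (derivWithin g (Icc 0 1) t) t :=
    fun t ht => hasDerivAt_derivWithin_Icc hg2' two_ne_zero ht
  have hg'_deriv : ∀ t ∈ Ioo (0:ℝ) 1,
      HasDerivAt (derivWithin g (Icc 0 1)) (derivWithin (derivWithin g (Icc 0 1)) (Icc 0 1) t) t :=
    fun t ht => hasDerivAt_derivWithin_Icc hg'C1 one_ne_zero ht
  have hg''_cont : ContinuousOn (derivWithin (derivWithin g (Icc 0 1)) (Icc 0 1)) (Ioc 0 x₀) :=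
    (contDiffOn_derivWithin_Icc (n := 0) hg'C1).continuousOn.mono hIoc
  have hmin' : IsMinOn g (Icc 0 1) x₀ := isMinOn_iff.2 hmin
  have hcrit : derivWithin g (Icc 0 1) x₀ = 0 :=
    (hmin'.isLocalMin (Icc_mem_nhds hx0 hx1)).hasDerivAt_eq_zero (hg_deriv x₀ ⟨hx0, hx1⟩)
  refine mul_pos (one_div_pos.2 (Real.Gamma_pos_of_pos (by linarith))) ?_
  refine integral_sub_rpow_mul_pos_of_isMinOn hδ1 hδ2 hx0 (hg1.continuousOn.mono hIcc)
    ((hg1.continuousOn_derivWithin (uniqueDiffOn_Icc one_pos) le_rfl).continuousWithinAt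
      (left_mem_Icc.2 zero_le_one) |>.mono hIcc)
    (fun t ht => hg_deriv t (hIoc ht)) (fun t ht => hg'_deriv t (hIoc ht)) hg''_cont ?_
    (hmin'.on_subset hIcc) hcrit hg'0
  refine intervalIntegrable_sub_rpow_mul (q := -θ) (C := C) (by linarith) (by linarith) hx0
    hg''_cont fun t ht => ?_
  simpa using hbound t ⟨ht.1, ht.2.trans hx1.le⟩

theorem stmt1 (δ : ℝ) (hδ1 : 1 < δ) (hδ2 : δ < 2) (g : ℝ → ℝ)
    (hg1 : ContDiffOn ℝ 1 g (Set.Icc 0 1)) (hg2 : ContDiffOn ℝ 2 g (Set.Ioc 0 1))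
    (C θ : ℝ) (hC : 0 < C) (hθ1 : 0 < θ) (hθ2 : θ < 1)
    (hbound : ∀ x ∈ Set.Ioc (0:ℝ) 1,
      |derivWithin (derivWithin g (Set.Icc 0 1)) (Set.Icc 0 1) x| ≤ C * x ^ (-θ))
    (x₀ : ℝ) (hx₀ : x₀ ∈ Set.Ioo (0:ℝ) 1)
    (hmin : ∀ x ∈ Set.Icc (0:ℝ) 1, g x₀ ≤ g x)
    (hg'0 : derivWithin g (Set.Icc 0 1) 0 < 0) :
    0 < caputoW δ g x₀ :=
  stmt1_general δ hδ1 hδ2 g hg1 hg2 C θ hθ2 hbound x₀ hx₀ hmin hg'0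
end

section
/- Let 1 < δ < 2, let b, c : [0,1] → ℝ be continuous with c(x) ≥ 0 for all x ∈ (0,1), let α₀ ≥ 1/(δ-1) and α₁ ≥ 0. Let g : [0,1] → ℝ be continuously differentiable on [0,1], twice continuously differentiable on (0,1], with |g''(x)| ≤ C x^{-θ} for all 0 < x ≤ 1 for some constants C > 0 and θ ∈ (0,1). Assume that −D*^δ g(x) + b(x) g'(x) + c(x) g(x) ≥ 0 for all x ∈ (0,1), that g(0) − α₀ g'(0) ≥ 0, and that g(1) + α₁ g'(1) ≥ 0. Then g(x) ≥ 0 for all x ∈ [0,1]. -/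
open Set Filter Topology MeasureTheory intervalIntegral

lemma IsMinOn.derivWithin_Icc_left_nonneg {f : ℝ → ℝ} {a b : ℝ} (hab : a < b)
    (h : IsMinOn f (Icc a b) a) : 0 ≤ derivWithin f (Icc a b) a := by
  have hcone := h.localize.fderivWithin_nonneg
    (sub_mem_posTangentConeAt_of_segment_subset (segment_eq_Icc hab.le).subset)
  rw [← mul_one (b - a), ← smul_eq_mul, map_smul, fderivWithin_derivWithin, smul_eq_mul] at hcone
  exact nonneg_of_mul_nonneg_right hcone (sub_pos.2 hab)

lemma IsMinOn.derivWithin_Icc_right_nonpos {f : ℝ → ℝ} {a b : ℝ} (hab : a < b)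
    (h : IsMinOn f (Icc a b) b) : derivWithin f (Icc a b) b ≤ 0 := by
  have hcone := h.localize.fderivWithin_nonneg
    (sub_mem_posTangentConeAt_of_segment_subset (by rw [segment_symm, segment_eq_Icc hab.le]))
  rw [← mul_one (a - b), ← smul_eq_mul, map_smul, fderivWithin_derivWithin, smul_eq_mul] at hcone
  nlinarith

lemma IsMinOn.derivWithin_eq_zero {f : ℝ → ℝ} {s : Set ℝ} {x : ℝ} (h : IsMinOn f s x)
    (hs : s ∈ 𝓝 x) : derivWithin f s x = 0 := by
  rw [derivWithin_of_mem_nhds hs]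
  exact (h.isLocalMin hs).deriv_eq_zero

lemma derivWithin_eqOn_deriv {f : ℝ → ℝ} {s U : Set ℝ} (hU : IsOpen U) (hUs : U ⊆ s) :
    EqOn (derivWithin f s) (deriv f) U :=
  fun _ hx => derivWithin_of_mem_nhds (mem_of_superset (hU.mem_nhds hx) hUs)

lemma ContDiffOn.derivWithin_of_isOpen_subset {f : ℝ → ℝ} {s U : Set ℝ} {n : WithTop ℕ∞}
    (hf : ContDiffOn ℝ (n + 1) f U) (hU : IsOpen U) (hUs : U ⊆ s) :
    ContDiffOn ℝ n (derivWithin f s) U :=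
  (hf.deriv_of_isOpen hU le_rfl).congr (derivWithin_eqOn_deriv hU hUs)

lemma DifferentiableOn.hasDerivAt_derivWithin_of_isOpen_subset {f : ℝ → ℝ} {s U : Set ℝ}
    {x : ℝ} (hf : DifferentiableOn ℝ f U) (hU : IsOpen U) (hUs : U ⊆ s) (hx : x ∈ U) :
    HasDerivAt f (derivWithin f s x) x := by
  rw [derivWithin_eqOn_deriv hU hUs hx]
  exact (hf.differentiableAt (hU.mem_nhds hx)).hasDerivAt

lemma abs_sub_le_of_abs_hasDerivAt_le {f f' : ℝ → ℝ} {a b M : ℝ} (hab : a ≤ b)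
    (hf : ContinuousOn f (Icc a b)) (hf' : ∀ x ∈ Ico a b, HasDerivAt f (f' x) x)
    (hM : ∀ x ∈ Ico a b, |f' x| ≤ M) : |f b - f a| ≤ M * (b - a) :=
  norm_image_sub_le_of_norm_deriv_right_le_segment hf (fun x hx => (hf' x hx).hasDerivWithinAt)
    hM b (right_mem_Icc.2 hab)

lemma integrableOn_rpow_sub_mul {f : ℝ → ℝ} {x₀ δ θ C : ℝ} (hδ1 : 1 ≤ δ) (hδ2 : δ < 2)
    (hθ0 : 0 ≤ θ) (hθ1 : θ < 1) (hC : 0 ≤ C) (hx₀ : 0 < x₀) (hf : ContinuousOn f (Ioo 0 x₀))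
    (hbound : ∀ t ∈ Ioo 0 x₀, |f t| ≤ C * t ^ (-θ)) :
    IntegrableOn (fun t => (x₀ - t) ^ (1 - δ) * f t) (Ioo 0 x₀) := by
  set k := fun t : ℝ => (x₀ - t) ^ (1 - δ)
  -- each factor of `k t * t ^ (-θ)` is bounded on the half of `(0, x₀)` away from its singularity
  have hsplit : ∀ t ∈ Ioo 0 x₀,
      k t * t ^ (-θ) ≤ (x₀ / 2) ^ (1 - δ) * t ^ (-θ) + (x₀ / 2) ^ (-θ) * k t := by
    intro t ⟨ht0, htx⟩
    have hk : 0 ≤ k t := Real.rpow_nonneg (by linarith) _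
    have hp : 0 ≤ t ^ (-θ) := Real.rpow_nonneg ht0.le _
    rcases le_total t (x₀ / 2) with h | h
    · have : k t ≤ (x₀ / 2) ^ (1 - δ) :=
        Real.rpow_le_rpow_of_nonpos (by linarith) (by linarith) (by linarith)
      nlinarith [mul_nonneg (Real.rpow_nonneg (by linarith : (0:ℝ) ≤ x₀ / 2) (-θ)) hk]
    · have : t ^ (-θ) ≤ (x₀ / 2) ^ (-θ) :=
        Real.rpow_le_rpow_of_nonpos (by linarith) h (by linarith)
      nlinarith [mul_nonneg (Real.rpow_nonneg (by linarith : (0:ℝ) ≤ x₀ / 2) (1 - δ)) hp]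
  have hdom : IntegrableOn
      (fun t => C * ((x₀ / 2) ^ (1 - δ) * t ^ (-θ) + (x₀ / 2) ^ (-θ) * k t)) (Ioo 0 x₀) := by
    have h1 : IntervalIntegrable (fun t : ℝ => t ^ (-θ)) volume 0 x₀ :=
      intervalIntegrable_rpow' (by linarith)
    have h2 : IntervalIntegrable k volume 0 x₀ := by
      simpa using (intervalIntegrable_rpow' (r := 1 - δ) (a := x₀) (b := 0)
        (by linarith)).comp_sub_left x₀
    rw [← intervalIntegrable_iff_integrableOn_Ioo_of_le hx₀.le]
    exact ((h1.const_mul _).add (h2.const_mul _)).const_mul C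
  have hk : ContinuousOn k (Ioo 0 x₀) :=
    (continuousOn_const.sub continuousOn_id).rpow_const fun t ht => Or.inl (sub_pos.2 ht.2).ne'
  refine hdom.mono' ((hk.mul hf).aestronglyMeasurable measurableSet_Ioo) ?_
  refine (ae_restrict_iff' measurableSet_Ioo).2 (Eventually.of_forall fun t ht => ?_)
  have hkt : 0 ≤ k t := Real.rpow_nonneg (by linarith [ht.2]) _
  calc ‖k t * f t‖ = k t * |f t| := by rw [norm_mul, Real.norm_eq_abs, abs_of_nonneg hkt]; rfl
    _ ≤ C * (k t * t ^ (-θ)) := by nlinarith [hbound t ht]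
    _ ≤ _ := mul_le_mul_of_nonneg_left (hsplit t ht) hC

section CaputoPrimitive

variable {δ x₀ t : ℝ} {g g' g'' : ℝ → ℝ}

/-- Integrating `(x₀ - t) ^ (1 - δ) * g'' t` by parts twice, with `g x₀` subtracted from `g`. -/
noncomputable def caputoPrimitive (δ x₀ : ℝ) (g g' : ℝ → ℝ) (t : ℝ) : ℝ :=
  (x₀ - t) ^ (1 - δ) * g' t - (δ - 1) * ((x₀ - t) ^ (-δ) * (g t - g x₀))

lemma hasDerivAt_caputoPrimitive (ht : t < x₀) (hg : HasDerivAt g (g' t) t)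
    (hg' : HasDerivAt g' (g'' t) t) :
    HasDerivAt (caputoPrimitive δ x₀ g g')
      ((x₀ - t) ^ (1 - δ) * g'' t - δ * (δ - 1) * ((x₀ - t) ^ (-δ - 1) * (g t - g x₀))) t := by
  have hpow (p : ℝ) : HasDerivAt (fun s => (x₀ - s) ^ p) (-1 * p * (x₀ - t) ^ (p - 1)) t :=
    ((hasDerivAt_id t).const_sub x₀).rpow_const (Or.inl (sub_pos.2 ht).ne')
  refine (((hpow (1 - δ)).mul hg').sub
    (((hpow (-δ)).mul (hg.sub_const (g x₀))).const_mul (δ - 1))).congr_deriv ?_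
  rw [show 1 - δ - 1 = -δ by ring]
  ring

lemma abs_caputoPrimitive_le {M : ℝ} (hδ : 1 ≤ δ) (ht : t < x₀) (h1 : |g' t| ≤ M * (x₀ - t))
    (h2 : |g t - g x₀| ≤ M * (x₀ - t) ^ 2) :
    |caputoPrimitive δ x₀ g g' t| ≤ δ * M * (x₀ - t) ^ (2 - δ) := by
  have hd : 0 < x₀ - t := sub_pos.2 ht
  set d := x₀ - t
  have hk1 : 0 ≤ d ^ (1 - δ) := Real.rpow_nonneg hd.le _
  have hk2 : 0 ≤ d ^ (-δ) := Real.rpow_nonneg hd.le _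
  have e1 : d ^ (1 - δ) = d ^ (2 - δ) * d⁻¹ := by
    rw [← Real.rpow_neg_one, ← Real.rpow_add hd]; ring_nf
  have e2 : d ^ (-δ) = d ^ (2 - δ) * d⁻¹ ^ 2 := by
    rw [← Real.rpow_neg_one, ← Real.rpow_natCast, ← Real.rpow_mul hd.le, ← Real.rpow_add hd]
    ring_nf
  calc |caputoPrimitive δ x₀ g g' t|
      ≤ d ^ (1 - δ) * |g' t| + (δ - 1) * (d ^ (-δ) * |g t - g x₀|) := by
        unfold caputoPrimitive
        refine (abs_sub _ _).trans_eq ?_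
        rw [abs_mul, abs_mul, abs_mul, abs_of_nonneg hk1, abs_of_nonneg hk2,
          abs_of_nonneg (by linarith : 0 ≤ δ - 1)]
    _ ≤ d ^ (1 - δ) * (M * d) + (δ - 1) * (d ^ (-δ) * (M * d ^ 2)) := by
        gcongr
    _ = δ * M * d ^ (2 - δ) := by
        rw [e1, e2]; field_simp; ring

/-- `caputoPrimitive` vanishes to order `2 - δ` at `x₀`, because `g' = O(x₀ - t)` and
`g - g x₀ = O((x₀ - t) ^ 2)` there. -/
lemma continuousWithinAt_Iio_caputoPrimitive {a M : ℝ} (hδ1 : 1 ≤ δ) (hδ2 : δ < 2) (ha : 0 ≤ a)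
    (hax : a < x₀) (hg : ContinuousOn g (Icc 0 x₀)) (hg' : ContinuousOn g' (Icc 0 x₀))
    (hgd : ∀ t ∈ Ioo 0 x₀, HasDerivAt g (g' t) t)
    (hg'd : ∀ t ∈ Ioo 0 x₀, HasDerivAt g' (g'' t) t) (hg'x₀ : g' x₀ = 0)
    (hM : ∀ t ∈ Ioo a x₀, |g'' t| ≤ M) :
    ContinuousWithinAt (caputoPrimitive δ x₀ g g') (Iio x₀) x₀ := by
  have hsub {t : ℝ} (ht : t ∈ Ioo a x₀) : Ico t x₀ ⊆ Ioo 0 x₀ ∩ Ioo a x₀ := fun s hs =>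
    ⟨⟨ha.trans_lt (ht.1.trans_le hs.1), hs.2⟩, ⟨ht.1.trans_le hs.1, hs.2⟩⟩
  have hIcc {t : ℝ} (ht : t ∈ Ioo a x₀) : Icc t x₀ ⊆ Icc 0 x₀ :=
    Icc_subset_Icc_left (ha.trans ht.1.le)
  have h1 : ∀ t ∈ Ioo a x₀, |g' t| ≤ M * (x₀ - t) := fun t ht => by
    simpa [hg'x₀, abs_neg] using abs_sub_le_of_abs_hasDerivAt_le ht.2.le (hg'.mono (hIcc ht))
      (fun s hs => hg'd s (hsub ht hs).1) (fun s hs => hM s (hsub ht hs).2)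
  have h2 : ∀ t ∈ Ioo a x₀, |g t - g x₀| ≤ M * (x₀ - t) ^ 2 := fun t ht => by
    have hM0 : 0 ≤ M := (abs_nonneg _).trans (hM t ht)
    rw [abs_sub_comm, sq, ← mul_assoc]
    refine abs_sub_le_of_abs_hasDerivAt_le ht.2.le (hg.mono (hIcc ht))
      (fun s hs => hgd s (hsub ht hs).1) fun s hs => ?_
    exact (h1 s (hsub ht hs).2).trans (by gcongr; exact hs.1)
  have hlim : Tendsto (fun t => δ * M * (x₀ - t) ^ (2 - δ)) (𝓝[<] x₀) (𝓝 0) := by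
    have : ContinuousAt (fun t => δ * M * (x₀ - t) ^ (2 - δ)) x₀ :=
      continuousAt_const.mul
        ((continuousAt_const.sub continuousAt_id).rpow_const (Or.inr (by linarith)))
    simpa [Real.zero_rpow (by linarith : 2 - δ ≠ 0)] using
      this.tendsto.mono_left nhdsWithin_le_nhds
  have hx₀ : caputoPrimitive δ x₀ g g' x₀ = 0 := by simp [caputoPrimitive, hg'x₀]
  rw [ContinuousWithinAt, hx₀]
  refine squeeze_zero_norm' ?_ hlim
  filter_upwards [Ioo_mem_nhdsLT hax] with t ht
  exact abs_caputoPrimitive_le hδ1 ht.2 (h1 t ht) (h2 t ht)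

lemma continuousOn_caputoPrimitive {a M : ℝ} (hδ1 : 1 ≤ δ) (hδ2 : δ < 2) (ha : 0 ≤ a)
    (hax : a < x₀) (hg : ContinuousOn g (Icc 0 x₀)) (hg' : ContinuousOn g' (Icc 0 x₀))
    (hgd : ∀ t ∈ Ioo 0 x₀, HasDerivAt g (g' t) t)
    (hg'd : ∀ t ∈ Ioo 0 x₀, HasDerivAt g' (g'' t) t) (hg'x₀ : g' x₀ = 0)
    (hM : ∀ t ∈ Ioo a x₀, |g'' t| ≤ M) :
    ContinuousOn (caputoPrimitive δ x₀ g g') (Icc 0 x₀) := by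
  intro t ht
  rcases ht.2.lt_or_eq with htx | rfl
  · have hpow (p : ℝ) : ContinuousWithinAt (fun s => (x₀ - s) ^ p) (Icc 0 x₀) t :=
      ((continuousAt_const.sub continuousAt_id).rpow_const
        (Or.inl (sub_pos.2 htx).ne')).continuousWithinAt
    exact ((hpow _).mul (hg' t ht)).sub
      (continuousWithinAt_const.mul ((hpow _).mul ((hg t ht).sub continuousWithinAt_const)))
  · exact (continuousWithinAt_Iio_iff_Iic.1 (continuousWithinAt_Iio_caputoPrimitive hδ1 hδ2 ha
      hax hg hg' hgd hg'd hg'x₀ hM)).mono Icc_subset_Iic_self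

theorem le_integral_rpow_sub_mul_of_isMinOn {a M : ℝ} (hδ1 : 1 ≤ δ) (hδ2 : δ < 2) (ha : 0 ≤ a)
    (hax : a < x₀) (hg : ContinuousOn g (Icc 0 x₀)) (hg' : ContinuousOn g' (Icc 0 x₀))
    (hgd : ∀ t ∈ Ioo 0 x₀, HasDerivAt g (g' t) t)
    (hg'd : ∀ t ∈ Ioo 0 x₀, HasDerivAt g' (g'' t) t) (hmin : IsMinOn g (Icc 0 x₀) x₀)
    (hg'x₀ : g' x₀ = 0) (hM : ∀ t ∈ Ioo a x₀, |g'' t| ≤ M)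
    (hint : IntegrableOn (fun t => (x₀ - t) ^ (1 - δ) * g'' t) (Icc 0 x₀)) :
    x₀ ^ (-δ) * ((δ - 1) * (g 0 - g x₀) - x₀ * g' 0) ≤
      ∫ t in 0..x₀, (x₀ - t) ^ (1 - δ) * g'' t := by
  have hx₀ : 0 < x₀ := ha.trans_lt hax
  have hFTC := sub_le_integral_of_hasDeriv_right_of_le hx₀.le
    (continuousOn_caputoPrimitive hδ1 hδ2 ha hax hg hg' hgd hg'd hg'x₀ hM)
    (fun t ht => (hasDerivAt_caputoPrimitive ht.2 (hgd t ht) (hg'd t ht)).hasDerivWithinAt) hint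
    fun t ht => sub_le_self _ <| mul_nonneg (mul_nonneg (by linarith) (by linarith)) <|
      mul_nonneg (Real.rpow_nonneg (by linarith [ht.2]) _)
        (sub_nonneg.2 (hmin (Ioo_subset_Icc_self ht)))
  have hF : caputoPrimitive δ x₀ g g' x₀ - caputoPrimitive δ x₀ g g' 0 =
      x₀ ^ (-δ) * ((δ - 1) * (g 0 - g x₀) - x₀ * g' 0) := by
    simp only [caputoPrimitive, sub_self, sub_zero, hg'x₀, mul_zero]
    rw [show 1 - δ = 1 + -δ by ring, Real.rpow_add hx₀, Real.rpow_one]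
    ring
  exact hF ▸ hFTC

end CaputoPrimitive

theorem le_gamma_mul_caputoW_of_isMinOn {δ C θ x₀ : ℝ} {g : ℝ → ℝ} (hδ1 : 1 ≤ δ) (hδ2 : δ < 2)
    (hg1 : ContDiffOn ℝ 1 g (Icc 0 1)) (hg2 : ContDiffOn ℝ 2 g (Ioo 0 1))
    (hC : 0 ≤ C) (hθ0 : 0 ≤ θ) (hθ1 : θ < 1)
    (hbound : ∀ t ∈ Ioo 0 x₀,
      |derivWithin (derivWithin g (Icc 0 1)) (Icc 0 1) t| ≤ C * t ^ (-θ))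
    (hx₀ : x₀ ∈ Ioo 0 1) (hmin : IsMinOn g (Icc 0 1) x₀) :
    x₀ ^ (-δ) * ((δ - 1) * (g 0 - g x₀) - x₀ * derivWithin g (Icc 0 1) 0) ≤
      Real.Gamma (2 - δ) * caputoW δ g x₀ := by
  set g₁ := derivWithin g (Icc 0 1)
  set g₂ := derivWithin g₁ (Icc 0 1)
  have hsub : Ioo 0 x₀ ⊆ Ioo (0:ℝ) 1 := Ioo_subset_Ioo_right hx₀.2.le
  have hg₁ : ContDiffOn ℝ 1 g₁ (Ioo 0 1) :=
    hg2.derivWithin_of_isOpen_subset isOpen_Ioo Ioo_subset_Icc_self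
  have hd1 (t) (ht : t ∈ Ioo 0 x₀) : HasDerivAt g (g₁ t) t :=
    (hg2.differentiableOn two_ne_zero).hasDerivAt_derivWithin_of_isOpen_subset isOpen_Ioo
      Ioo_subset_Icc_self (hsub ht)
  have hd2 (t) (ht : t ∈ Ioo 0 x₀) : HasDerivAt g₁ (g₂ t) t :=
    (hg₁.differentiableOn one_ne_zero).hasDerivAt_derivWithin_of_isOpen_subset isOpen_Ioo
      Ioo_subset_Icc_self (hsub ht)
  have hg₂ : ContinuousOn g₂ (Ioo 0 x₀) :=
    ((hg₁.derivWithin_of_isOpen_subset (n := 0) isOpen_Ioo Ioo_subset_Icc_self).continuousOn).mono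
      hsub
  have hM (t) (ht : t ∈ Ioo (x₀ / 2) x₀) : |g₂ t| ≤ C * (x₀ / 2) ^ (-θ) :=
    (hbound t ⟨by linarith [hx₀.1, ht.1], ht.2⟩).trans <| mul_le_mul_of_nonneg_left
      (Real.rpow_le_rpow_of_nonpos (by linarith [hx₀.1]) ht.1.le (by linarith)) hC
  have hint := integrableOn_rpow_sub_mul hδ1 hδ2 hθ0 hθ1 hC hx₀.1 hg₂ hbound
  have hIcc : Icc 0 x₀ ⊆ Icc (0:ℝ) 1 := Icc_subset_Icc_right hx₀.2.le
  have key := le_integral_rpow_sub_mul_of_isMinOn hδ1 hδ2 (by linarith [hx₀.1])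
    (by linarith [hx₀.1]) (hg1.continuousOn.mono hIcc)
    ((hg1.continuousOn_derivWithin (uniqueDiffOn_Icc zero_lt_one) le_rfl).mono hIcc) hd1 hd2
    (hmin.on_subset hIcc) (hmin.derivWithin_eq_zero (Icc_mem_nhds hx₀.1 hx₀.2)) hM
    (by rwa [integrableOn_Icc_iff_integrableOn_Ioo])
  rwa [caputoW, ← mul_assoc, mul_one_div_cancel (Real.Gamma_pos_of_pos (by linarith)).ne',
    one_mul]

theorem stmt2_general (δ : ℝ) (hδ1 : 1 < δ) (hδ2 : δ < 2)
    (b c : ℝ → ℝ) (hc0 : ∀ x ∈ Set.Ioo (0:ℝ) 1, 0 ≤ c x)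
    (α₀ α₁ : ℝ) (hα₀ : 1 / (δ - 1) ≤ α₀) (hα₁ : 0 ≤ α₁)
    (g : ℝ → ℝ) (hg1 : ContDiffOn ℝ 1 g (Set.Icc 0 1)) (hg2 : ContDiffOn ℝ 2 g (Set.Ioc 0 1))
    (C θ : ℝ) (hC : 0 < C) (hθ1 : 0 < θ) (hθ2 : θ < 1)
    (hbound : ∀ x ∈ Set.Ioc (0:ℝ) 1,
      |derivWithin (derivWithin g (Set.Icc 0 1)) (Set.Icc 0 1) x| ≤ C * x ^ (-θ))
    (hineq : ∀ x ∈ Set.Ioo (0:ℝ) 1,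
      0 ≤ -caputoW δ g x + b x * derivWithin g (Set.Icc 0 1) x + c x * g x)
    (hbc0 : 0 ≤ g 0 - α₀ * derivWithin g (Set.Icc 0 1) 0)
    (hbc1 : 0 ≤ g 1 + α₁ * derivWithin g (Set.Icc 0 1) 1) :
    ∀ x ∈ Set.Icc (0:ℝ) 1, 0 ≤ g x := by
  obtain ⟨x₀, hx₀, hmin⟩ :=
    isCompact_Icc.exists_isMinOn (nonempty_Icc.2 zero_le_one) hg1.continuousOn
  suffices 0 ≤ g x₀ from fun x hx => this.trans (hmin hx)
  by_contra! hneg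
  have hα : 1 ≤ α₀ * (δ - 1) := (div_le_iff₀ (by linarith)).1 hα₀
  rcases hx₀.1.eq_or_lt with rfl | h0
  · nlinarith [hmin.derivWithin_Icc_left_nonneg zero_lt_one]
  rcases hx₀.2.eq_or_lt with rfl | h1
  · nlinarith [hmin.derivWithin_Icc_right_nonpos zero_lt_one]
  have hcrit := hmin.derivWithin_eq_zero (Icc_mem_nhds h0 h1)
  have hcaputo : caputoW δ g x₀ ≤ 0 := by
    have := hineq x₀ ⟨h0, h1⟩
    rw [hcrit, mul_zero, add_zero] at this
    nlinarith [hc0 x₀ ⟨h0, h1⟩]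
  have hlow := le_gamma_mul_caputoW_of_isMinOn hδ1.le hδ2 hg1 (hg2.mono Ioo_subset_Ioc_self)
    hC.le hθ1.le hθ2 (fun t ht => hbound t ⟨ht.1, ht.2.le.trans h1.le⟩) ⟨h0, h1⟩ hmin
  have hkey : (δ - 1) * (g 0 - g x₀) - x₀ * derivWithin g (Icc 0 1) 0 ≤ 0 :=
    nonpos_of_mul_nonpos_right (hlow.trans (mul_nonpos_of_nonneg_of_nonpos
      (Real.Gamma_pos_of_pos (sub_pos.2 hδ2)).le hcaputo)) (Real.rpow_pos_of_pos h0 _)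
  have hg0 : g x₀ ≤ g 0 := hmin (left_mem_Icc.2 zero_le_one)
  rcases le_or_gt 0 (derivWithin g (Icc 0 1) 0) with hd | hd <;> nlinarith

theorem stmt2 (δ : ℝ) (hδ1 : 1 < δ) (hδ2 : δ < 2)
    (b c : ℝ → ℝ) (hb : ContinuousOn b (Set.Icc 0 1)) (hc : ContinuousOn c (Set.Icc 0 1))
    (hc0 : ∀ x ∈ Set.Ioo (0:ℝ) 1, 0 ≤ c x)
    (α₀ α₁ : ℝ) (hα₀ : 1 / (δ - 1) ≤ α₀) (hα₁ : 0 ≤ α₁)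
    (g : ℝ → ℝ) (hg1 : ContDiffOn ℝ 1 g (Set.Icc 0 1)) (hg2 : ContDiffOn ℝ 2 g (Set.Ioc 0 1))
    (C θ : ℝ) (hC : 0 < C) (hθ1 : 0 < θ) (hθ2 : θ < 1)
    (hbound : ∀ x ∈ Set.Ioc (0:ℝ) 1,
      |derivWithin (derivWithin g (Set.Icc 0 1)) (Set.Icc 0 1) x| ≤ C * x ^ (-θ))
    (hineq : ∀ x ∈ Set.Ioo (0:ℝ) 1,
      0 ≤ -caputoW δ g x + b x * derivWithin g (Set.Icc 0 1) x + c x * g x)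
    (hbc0 : 0 ≤ g 0 - α₀ * derivWithin g (Set.Icc 0 1) 0)
    (hbc1 : 0 ≤ g 1 + α₁ * derivWithin g (Set.Icc 0 1) 1) :
    ∀ x ∈ Set.Icc (0:ℝ) 1, 0 ≤ g x :=
  stmt2_general δ hδ1 hδ2 b c hc0 α₀ α₁ hα₀ hα₁ g hg1 hg2 C θ hC hθ1 hθ2 hbound hineq hbc0 hbc1
end
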